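/- arXiv:1407.5208 — 4 statements merged into one kernel-verified Lean document; each statement's English description precedes it below -/
import Mathlib

section
/- Let V : ℝ → B(H) be strongly continuous, locally norm-bounded, with V(t) selfadjoint for every t. Then there exists a unique two-parameter family U(t,s) ∈ B(H), t,s ∈ ℝ, such that U(s,s) = I for all s and, for every x ∈ H and every s, the map t ↦ U(t,s)x is differentiable with i d/dt (U(t,s)x) = V(t) U(t,s) x; moreover every U(t,s) is a unitary operator. -/
/-!
With `A = -i V`, the solution of `x' = A(t) x`, `x(s) = x`, is the Dyson series `∑ₙ uₙ(t)`,
where `u₀ = x` and `uₙ₊₁(t) = ∫ₛᵗ A(τ) uₙ(τ) dτ`. If `‖A‖ ≤ M` between `s` and `t`, then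
`‖uₙ(t)‖ ≤ ‖x‖ (M |t - s|)ⁿ / n!`, so the series may be differentiated termwise. Such a local
bound on `‖A‖` comes for free from strong continuity by Banach–Steinhaus. Uniqueness is
Grönwall's; it also makes the solution linear in `x` and gives the cocycle law
`U(t, r) U(r, s) = U(t, s)`, so each `U(t, s)` is invertible. Since `A(t)` is skew-adjoint,
`‖x(t)‖²` has derivative `2 Re ⟪x, A x⟫ = 0`, so `U(t, s)` is an invertible isometry, i.e. unitary.
-/

open ContinuousLinearMap Set Filter Topology MeasureTheory intervalIntegral Nat
open scoped Interval

section Banach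

variable {E : Type*} [NormedAddCommGroup E] [NormedSpace ℂ E] {A : ℝ → E →L[ℂ] E}

variable (A) in
noncomputable def dysonTerm (s : ℝ) (x : E) : ℕ → ℝ → E
  | 0 => fun _ => x
  | n + 1 => fun t => ∫ τ in s..t, A τ (dysonTerm s x n τ)

variable (A) in
noncomputable def dysonSeries (s : ℝ) (x : E) (t : ℝ) : E := ∑' n, dysonTerm A s x n t

theorem norm_dysonTerm_le {s t M : ℝ} (x : E) (hM : ∀ τ ∈ [[s, t]], ‖A τ‖ ≤ M) (n : ℕ) :
    ‖dysonTerm A s x n t‖ ≤ ‖x‖ * ((M * |t - s|) ^ n / n !) := by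
  have hM0 : 0 ≤ M := (norm_nonneg _).trans (hM s left_mem_uIcc)
  induction n generalizing t with
  | zero => simp [dysonTerm]
  | succ n ih =>
    have hsub : ∀ τ ∈ Ι s t, [[s, τ]] ⊆ [[s, t]] := fun τ hτ =>
      uIcc_subset_uIcc_left (uIoc_subset_uIcc hτ)
    calc ‖dysonTerm A s x (n + 1) t‖
        ≤ |∫ τ in s..t, M * (‖x‖ * ((M * |τ - s|) ^ n / n !))| := by
          refine norm_integral_le_abs_of_norm_le
            ((ae_restrict_iff' measurableSet_uIoc).2 (ae_of_all _ fun τ hτ => ?_))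
            (Continuous.intervalIntegrable (by fun_prop) _ _)
          exact (A τ).le_of_opNorm_le_of_le (hM τ (uIoc_subset_uIcc hτ))
            (ih (fun σ hσ => hM σ (hsub τ hτ hσ)))
      _ = ‖x‖ * M ^ (n + 1) / n ! * ∫ τ in Ι s t, |τ - s| ^ n := by
          rw [abs_intervalIntegral_eq, ← MeasureTheory.integral_const_mul,
            abs_of_nonneg (by positivity)]
          simp only [mul_pow]
          congr 1
          funext τ
          ring
      _ = ‖x‖ * ((M * |t - s|) ^ (n + 1) / (n + 1) !) := by
          rw [integral_pow_abs_sub_uIoc, factorial_succ]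
          push_cast
          field_simp
          ring

theorem norm_dysonSeries_le {s t M : ℝ} (x : E) (hM : ∀ τ ∈ [[s, t]], ‖A τ‖ ≤ M) :
    ‖dysonSeries A s x t‖ ≤ ‖x‖ * Real.exp (M * |t - s|) := by
  have hexp : HasSum (fun n => (M * |t - s|) ^ n / n !) (Real.exp (M * |t - s|)) := by
    rw [Real.exp_eq_exp_ℝ]
    exact NormedSpace.expSeries_div_hasSum_exp _
  exact tsum_of_norm_bounded (hexp.mul_left ‖x‖) (norm_dysonTerm_le x hM)

theorem dysonSeries_self (s : ℝ) (x : E) : dysonSeries A s x s = x :=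
  tsum_eq_single 0 fun n hn => by
    obtain ⟨n, rfl⟩ := exists_eq_succ_of_ne_zero hn
    simp [dysonTerm]

variable (A) in
def IsPropagator (U : ℝ → ℝ → E →L[ℂ] E) : Prop :=
  (∀ s, U s s = 1) ∧ ∀ s x t, HasDerivAt (fun τ => U τ s x) (A t (U t s x)) t

variable [CompleteSpace E]

theorem IsCompact.exists_bound_of_continuous_apply (hA : ∀ x, Continuous fun t => A t x)
    {K : Set ℝ} (hK : IsCompact K) : ∃ M, ∀ t ∈ K, ‖A t‖ ≤ M := by
  obtain ⟨M, hM⟩ := banach_steinhaus (g := fun t : K => A t) fun x =>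
    (hK.exists_bound_of_continuousOn (hA x).continuousOn).imp fun _ hC t => hC t t.2
  exact ⟨M, fun t ht => hM ⟨t, ht⟩⟩

theorem continuous_apply_of_continuous_apply (hA : ∀ x, Continuous fun t => A t x)
    {f : ℝ → E} (hf : Continuous f) : Continuous fun t => A t (f t) := by
  refine continuous_iff_continuousAt.2 fun t₀ => ?_
  obtain ⟨M, hM⟩ :=
    (isCompact_Icc (a := t₀ - 1) (b := t₀ + 1)).exists_bound_of_continuous_apply hA
  have h_near : Tendsto (fun t => A t (f t - f t₀)) (𝓝 t₀) (𝓝 0) := by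
    refine squeeze_zero_norm' ?_
      (by simpa using ((hf.tendsto t₀).sub_const (f t₀)).norm.const_mul M)
    filter_upwards [Icc_mem_nhds (sub_one_lt t₀) (lt_add_one t₀)] with t ht
    exact (A t).le_of_opNorm_le (hM t ht) _
  simpa [ContinuousAt] using h_near.add ((hA (f t₀)).tendsto t₀)

variable (hA : ∀ x, Continuous fun t => A t x)
include hA

theorem exists_mem_Ioo_forall_norm_le (s t : ℝ) :
    ∃ a b M, s ∈ Ioo a b ∧ t ∈ Ioo a b ∧ ∀ τ ∈ Icc a b, ‖A τ‖ ≤ M := by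
  obtain ⟨M, hM⟩ :=
    (isCompact_Icc (a := min s t - 1) (b := max s t + 1)).exists_bound_of_continuous_apply hA
  exact ⟨_, _, M, ⟨by linarith [min_le_left s t], by linarith [le_max_left s t]⟩,
    ⟨by linarith [min_le_right s t], by linarith [le_max_right s t]⟩, hM⟩

theorem continuous_dysonTerm (s : ℝ) (x : E) (n : ℕ) : Continuous (dysonTerm A s x n) := by
  induction n with
  | zero => exact continuous_const
  | succ n ih =>
    exact continuous_primitive (fun a b =>
      (continuous_apply_of_continuous_apply hA ih).intervalIntegrable a b) s

theorem hasDerivAt_dysonTerm_succ (s : ℝ) (x : E) (n : ℕ) (t : ℝ) :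
    HasDerivAt (dysonTerm A s x (n + 1)) (A t (dysonTerm A s x n t)) t :=
  ((continuous_apply_of_continuous_apply hA
    (continuous_dysonTerm hA s x n)).integral_hasStrictDerivAt s t).hasDerivAt

theorem summable_dysonTerm (s : ℝ) (x : E) (t : ℝ) : Summable fun n => dysonTerm A s x n t := by
  obtain ⟨M, hM⟩ := (isCompact_uIcc (a := s) (b := t)).exists_bound_of_continuous_apply hA
  exact .of_norm_bounded ((Real.summable_pow_div_factorial _).mul_left ‖x‖)
    (norm_dysonTerm_le x hM)

theorem hasDerivAt_dysonSeries (s : ℝ) (x : E) (t : ℝ) :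
    HasDerivAt (dysonSeries A s x) (A t (dysonSeries A s x t)) t := by
  obtain ⟨a, b, M, hs, ht, hM⟩ := exists_mem_Ioo_forall_norm_le hA s t
  have hM0 : 0 ≤ M := (norm_nonneg _).trans (hM s (Ioo_subset_Icc_self hs))
  have hbound : ∀ n, ∀ y ∈ Ioo a b, ‖A y (dysonTerm A s x n y)‖ ≤
      M * (‖x‖ * ((M * (b - a)) ^ n / n !)) := by
    intro n y hy
    have hsy : [[s, y]] ⊆ Icc a b :=
      uIcc_subset_Icc (Ioo_subset_Icc_self hs) (Ioo_subset_Icc_self hy)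
    refine (A y).le_of_opNorm_le_of_le (hM y (Ioo_subset_Icc_self hy))
      ((norm_dysonTerm_le x (fun τ hτ => hM τ (hsy hτ)) n).trans ?_)
    have : |y - s| ≤ b - a := abs_sub_le_iff.2 ⟨by linarith [hy.2, hs.1], by linarith [hy.1, hs.2]⟩
    gcongr
  have htail := hasDerivAt_tsum_of_isPreconnected
    (((Real.summable_pow_div_factorial _).mul_left ‖x‖).mul_left M) isOpen_Ioo
    isPreconnected_Ioo (fun n y _ => hasDerivAt_dysonTerm_succ hA s x n y) hbound hs
    ((summable_dysonTerm hA s x s).comp_injective (add_left_injective 1)) ht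
  convert htail.const_add x using 1
  · exact funext fun y => (summable_dysonTerm hA s x y).tsum_eq_zero_add
  · exact (A t).map_tsum (summable_dysonTerm hA s x t)

theorem linear_ODE_solution_unique {f g : ℝ → E} {s : ℝ}
    (hf : ∀ t, HasDerivAt f (A t (f t)) t) (hg : ∀ t, HasDerivAt g (A t (g t)) t)
    (hfg : f s = g s) : f = g := by
  funext t
  obtain ⟨a, b, M, hs, ht, hM⟩ := exists_mem_Ioo_forall_norm_le hA s t
  have hlip : ∀ τ ∈ Ioo a b, LipschitzOnWith M.toNNReal (A τ) univ := fun τ hτ =>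
    ((A τ).lipschitz.weaken (by
      rw [← NNReal.coe_le_coe, Real.coe_toNNReal']
      exact (hM τ (Ioo_subset_Icc_self hτ)).trans (le_max_left _ _))).lipschitzOnWith
  exact ODE_solution_unique_of_mem_Ioo (v := fun τ => A τ) hlip hs
    (fun τ _ => ⟨hf τ, mem_univ _⟩) (fun τ _ => ⟨hg τ, mem_univ _⟩) hfg ht

theorem dysonSeries_add (s : ℝ) (x y : E) :
    dysonSeries A s (x + y) = dysonSeries A s x + dysonSeries A s y :=
  linear_ODE_solution_unique hA (s := s) (hasDerivAt_dysonSeries hA s (x + y))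
    (fun t => by
      simpa using (hasDerivAt_dysonSeries hA s x t).add (hasDerivAt_dysonSeries hA s y t))
    (by simp [dysonSeries_self])

theorem dysonSeries_smul (s : ℝ) (c : ℂ) (x : E) :
    dysonSeries A s (c • x) = c • dysonSeries A s x :=
  linear_ODE_solution_unique hA (s := s) (hasDerivAt_dysonSeries hA s (c • x))
    (fun t => by simpa using (hasDerivAt_dysonSeries hA s x t).const_smul c)
    (by simp [dysonSeries_self])

theorem exists_isPropagator : ∃ U, IsPropagator A U := by
  refine ⟨fun t s => LinearMap.mkContinuousOfExistsBound
    { toFun := fun x => dysonSeries A s x t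
      map_add' := fun x y => congrFun (dysonSeries_add hA s x y) t
      map_smul' := fun c x => congrFun (dysonSeries_smul hA s c x) t } ?_,
    fun s => ext (dysonSeries_self s), fun s x t => hasDerivAt_dysonSeries hA s x t⟩
  obtain ⟨M, hM⟩ := (isCompact_uIcc (a := s) (b := t)).exists_bound_of_continuous_apply hA
  exact ⟨_, fun x => (norm_dysonSeries_le x hM).trans_eq (mul_comm _ _)⟩

theorem IsPropagator.unique {U U' : ℝ → ℝ → E →L[ℂ] E} (hU : IsPropagator A U)
    (hU' : IsPropagator A U') : U = U' := by
  ext t s x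
  exact congrFun (linear_ODE_solution_unique hA (s := s) (hU.2 s x) (hU'.2 s x)
    (by simp [hU.1, hU'.1])) t

theorem IsPropagator.mul_eq {U : ℝ → ℝ → E →L[ℂ] E} (hU : IsPropagator A U) (t r s : ℝ) :
    U t r * U r s = U t s := by
  ext x
  exact congrFun (linear_ODE_solution_unique hA (s := r) (fun τ => hU.2 r (U r s x) τ)
    (hU.2 s x) (by simp [hU.1])) t

end Banach

section Hilbert

variable {H : Type*} [NormedAddCommGroup H] [InnerProductSpace ℂ H] [CompleteSpace H]
  {A : ℝ → H →L[ℂ] H}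

theorem re_inner_apply_self_eq_zero {T : H →L[ℂ] H} (hT : T ∈ skewAdjoint (H →L[ℂ] H))
    (x : H) : RCLike.re (inner ℂ x (T x)) = 0 := by
  have h : inner ℂ x (T x) = -(starRingEnd ℂ) (inner ℂ x (T x)) := by
    rw [inner_conj_symm, ← adjoint_inner_right, ← star_eq_adjoint, skewAdjoint.mem_iff.1 hT,
      neg_apply, inner_neg_right, neg_neg]
  have := congrArg RCLike.re h
  simp only [map_neg, RCLike.conj_re] at this
  linarith

theorem norm_eq_of_hasDerivAt_of_mem_skewAdjoint (hA : ∀ t, A t ∈ skewAdjoint (H →L[ℂ] H))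
    {f : ℝ → H} (hf : ∀ t, HasDerivAt f (A t (f t)) t) (t s : ℝ) : ‖f t‖ = ‖f s‖ := by
  let _ : InnerProductSpace ℝ H := .rclikeToReal ℂ H
  have hderiv : ∀ τ, HasDerivAt (‖f ·‖ ^ 2) 0 τ := fun τ => by
    simpa [real_inner_eq_re_inner ℂ, re_inner_apply_self_eq_zero (hA τ)] using (hf τ).norm_sq
  have := is_const_of_deriv_eq_zero (fun τ => (hderiv τ).differentiableAt)
    (fun τ => (hderiv τ).deriv) t s
  exact (sq_eq_sq₀ (norm_nonneg _) (norm_nonneg _)).1 this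

theorem IsPropagator.mem_unitary (hA : ∀ x, Continuous fun t => A t x)
    (hA_skew : ∀ t, A t ∈ skewAdjoint (H →L[ℂ] H)) {U : ℝ → ℝ → H →L[ℂ] H}
    (hU : IsPropagator A U) (t s : ℝ) : U t s ∈ unitary (H →L[ℂ] H) := by
  have hunit : IsUnit (U t s) :=
    ⟨⟨U t s, U s t, by rw [hU.mul_eq hA, hU.1], by rw [hU.mul_eq hA, hU.1]⟩, rfl⟩
  refine hunit.mem_unitary_of_star_mul_self ?_
  rw [star_eq_adjoint, ContinuousLinearMap.mul_def, ← norm_map_iff_adjoint_comp_self]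
  intro x
  rw [norm_eq_of_hasDerivAt_of_mem_skewAdjoint hA_skew (hU.2 s x) t s, hU.1, one_apply_eq_self]

end Hilbert

theorem unitary_propagator_exists_unique_general
    {H : Type*} [NormedAddCommGroup H] [InnerProductSpace ℂ H] [CompleteSpace H]
    (V : ℝ → H →L[ℂ] H)
    (hV_strong_cont : ∀ x : H, Continuous fun t => V t x)
    (hV_sa : ∀ t : ℝ, IsSelfAdjoint (V t)) :
    ∃ U : ℝ → ℝ → H →L[ℂ] H,
      ((∀ s : ℝ, U s s = 1) ∧
        (∀ (s : ℝ) (x : H) (t : ℝ),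
          HasDerivAt (fun τ : ℝ => U τ s x) (-(Complex.I) • V t (U t s x)) t)) ∧
      (∀ t s : ℝ, U t s ∈ unitary (H →L[ℂ] H)) ∧
      (∀ U' : ℝ → ℝ → H →L[ℂ] H,
        ((∀ s : ℝ, U' s s = 1) ∧
          (∀ (s : ℝ) (x : H) (t : ℝ),
            HasDerivAt (fun τ : ℝ => U' τ s x) (-(Complex.I) • V t (U' t s x)) t)) →
        U' = U) := by
  set A : ℝ → H →L[ℂ] H := fun t => -Complex.I • V t
  have hA : ∀ x, Continuous fun t => A t x := fun x => (hV_strong_cont x).const_smul _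
  have hA_skew : ∀ t, A t ∈ skewAdjoint (H →L[ℂ] H) := fun t =>
    (hV_sa t).smul_mem_skewAdjoint (neg_mem RCLike.I_mem_skewAdjoint)
  obtain ⟨U, hU⟩ := exists_isPropagator hA
  exact ⟨U, hU, hU.mem_unitary hA hA_skew, fun U' hU' => IsPropagator.unique hA hU' hU⟩

/-- **Existence and uniqueness of the unitary propagator.**
Let `V : ℝ → B(H)` be strongly continuous, locally norm-bounded, with `V t` selfadjoint for
every `t`. Then there exists a unique two-parameter family `U t s ∈ B(H)` such that
`U s s = 1` for all `s` and, for every `x ∈ H` and every `s`, the map `t ↦ U t s x` is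
differentiable with `i d/dt (U t s x) = V t (U t s x)` (equivalently,
`d/dt (U t s x) = -i • V t (U t s x)`); moreover every `U t s` is a unitary operator. -/
theorem unitary_propagator_exists_unique
    {H : Type*} [NormedAddCommGroup H] [InnerProductSpace ℂ H] [CompleteSpace H]
    (V : ℝ → H →L[ℂ] H)
    (hV_strong_cont : ∀ x : H, Continuous fun t => V t x)
    (hV_loc_bdd : ∀ T : ℝ, 0 < T → ∃ M : ℝ, ∀ t : ℝ, |t| ≤ T → ‖V t‖ ≤ M)
    (hV_sa : ∀ t : ℝ, IsSelfAdjoint (V t)) :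
    ∃ U : ℝ → ℝ → H →L[ℂ] H,
      ((∀ s : ℝ, U s s = 1) ∧
        (∀ (s : ℝ) (x : H) (t : ℝ),
          HasDerivAt (fun τ : ℝ => U τ s x) (-(Complex.I) • V t (U t s x)) t)) ∧
      (∀ t s : ℝ, U t s ∈ unitary (H →L[ℂ] H)) ∧
      (∀ U' : ℝ → ℝ → H →L[ℂ] H,
        ((∀ s : ℝ, U' s s = 1) ∧
          (∀ (s : ℝ) (x : H) (t : ℝ),
            HasDerivAt (fun τ : ℝ => U' τ s x) (-(Complex.I) • V t (U' t s x)) t)) →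
        U' = U) :=
  unitary_propagator_exists_unique_general V hV_strong_cont hV_sa
end

section
/- Let V_L, V_R : ℝ → B(H) be strongly continuous, locally norm-bounded, with V_L(t), V_R(t) selfadjoint for every t, and let C : ℝ → B(H) satisfy, for every x ∈ H, that t ↦ C(t)x is differentiable with i d/dt(C(t)x) = V_L(t)C(t)x + C(t)V_R(t)x. Then the operator norm is conserved: ‖C(t)‖_{B(H)} = ‖C(0)‖_{B(H)} for all t ∈ ℝ. -/
/-!
Let `u` solve `u' = i V_R(t) u` with `u(s) = x`. This linear equation has a solution on every
compact interval: `V_R` is strongly continuous, hence locally norm-bounded by Banach–Steinhaus,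
so Picard–Lindelöf solutions on short intervals can be glued. Both `u` and `C(t) u(t)` evolve
under skew-adjoint generators (`i V_R` and `-i V_L`; the `C V_R u` terms cancel), so their norms
are constant, whence `‖C(s) x‖ = ‖C(r) u(r)‖ ≤ ‖C(r)‖ ‖x‖` for all `s` and `r`.
-/

open Set Filter Topology NNReal Asymptotics RCLike ContinuousLinearMap

theorem IsCompact.exists_forall_nnnorm_le_of_continuousOn_apply {X 𝕜 E F : Type*}
    [TopologicalSpace X] [NontriviallyNormedField 𝕜] [NormedAddCommGroup E] [NormedSpace 𝕜 E]
    [CompleteSpace E] [NormedAddCommGroup F] [NormedSpace 𝕜 F] {K : Set X} (hK : IsCompact K)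
    {A : X → E →L[𝕜] F} (hA : ∀ x, ContinuousOn (fun t ↦ A t x) K) :
    ∃ M : ℝ≥0, ∀ t ∈ K, ‖A t‖₊ ≤ M := by
  obtain ⟨M, hM⟩ := banach_steinhaus (g := fun t : K ↦ A t) fun x ↦
    (hK.exists_bound_of_continuousOn (hA x)).imp fun _ h t ↦ h t t.2
  refine ⟨M.toNNReal, fun t ht ↦ ?_⟩
  rw [← NNReal.coe_le_coe, coe_nnnorm]
  exact (hM ⟨t, ht⟩).trans (Real.le_coe_toNNReal M)

theorem HasDerivWithinAt.clm_apply_of_eventually_norm_le {E F : Type*}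
    [NormedAddCommGroup E] [NormedSpace ℂ E] [NormedAddCommGroup F] [NormedSpace ℂ F]
    {C : ℝ → E →L[ℂ] F} {C' : E → F} {w : ℝ → E} {w' : E} {s : Set ℝ} {t M : ℝ}
    (hC : ∀ x, HasDerivWithinAt (fun τ ↦ C τ x) (C' x) s t)
    (hCM : ∀ᶠ τ in 𝓝[s] t, ‖C τ‖ ≤ M) (hw : HasDerivWithinAt w w' s t) :
    HasDerivWithinAt (fun τ ↦ C τ (w τ)) (C' (w t) + C t w') s t := by
  set r : ℝ → E := fun τ ↦ w τ - w t - (τ - t) • w'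
  have hr : HasDerivWithinAt (fun τ ↦ C τ (r τ)) 0 s t := by
    have hCr : (fun τ ↦ C τ (r τ)) =O[𝓝[s] t] r :=
      .of_bound M (hCM.mono fun τ hτ ↦ (C τ).le_of_opNorm_le hτ (r τ))
    rw [hasDerivWithinAt_iff_isLittleO]
    simpa [r] using hCr.trans_isLittleO (hasDerivWithinAt_iff_isLittleO.mp hw)
  have hsplit : (fun τ ↦ C τ (w τ)) =
      fun τ ↦ C τ (w t) + (τ - t) • C τ w' + C τ (r τ) := by
    ext τ
    simp only [r, map_sub, map_smul_of_tower]
    abel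
  rw [hsplit]
  simpa using ((hC (w t)).fun_add
    (((hasDerivAt_id t).sub_const t).hasDerivWithinAt.fun_smul (hC w'))).fun_add hr

theorem constant_of_hasDerivWithinAt_Icc_zero {E : Type*} [NormedAddCommGroup E]
    [NormedSpace ℝ E] {f : ℝ → E} {a b : ℝ}
    (hf : ∀ t ∈ Icc a b, HasDerivWithinAt f 0 (Icc a b) t) : ∀ t ∈ Icc a b, f t = f a := by
  refine constant_of_has_deriv_right_zero (fun t ht ↦ (hf t ht).continuousWithinAt)
    fun t ht ↦ ?_
  have h : HasDerivWithinAt f 0 (Ici t ∩ Iic b) t :=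
    (hf t (Ico_subset_Icc_self ht)).mono fun τ hτ ↦ ⟨ht.1.trans hτ.1, hτ.2⟩
  exact (hasDerivWithinAt_inter (Iic_mem_nhds ht.2)).mp h

section LinearODE

variable {𝕜 E : Type*} [NontriviallyNormedField 𝕜] [NormedAddCommGroup E] [NormedSpace ℝ E]
  [NormedSpace 𝕜 E]

theorem IsIntegralCurveOn.congr_eqOn {γ γ' : ℝ → E} {v : ℝ → E → E} {s : Set ℝ}
    (hγ : IsIntegralCurveOn γ v s) (h : EqOn γ' γ s) : IsIntegralCurveOn γ' v s :=
  fun t ht ↦ by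
    rw [h ht]
    exact (hγ t ht).congr h (h ht)

theorem IsIntegralCurveOn.ite_Icc {γ₁ γ₂ : ℝ → E} {v : ℝ → E → E} {a b c : ℝ}
    (hac : a ≤ c) (hcb : c ≤ b) (h₁ : IsIntegralCurveOn γ₁ v (Icc a c))
    (h₂ : IsIntegralCurveOn γ₂ v (Icc c b)) (hc : γ₁ c = γ₂ c) :
    IsIntegralCurveOn (fun t ↦ if t ≤ c then γ₁ t else γ₂ t) v (Icc a b) := by
  set γ : ℝ → E := fun t ↦ if t ≤ c then γ₁ t else γ₂ t
  have h₁' : IsIntegralCurveOn γ v (Icc a c) := h₁.congr_eqOn fun t ht ↦ if_pos ht.2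
  have h₂' : IsIntegralCurveOn γ v (Icc c b) := h₂.congr_eqOn fun t ht ↦ by
    rcases ht.1.eq_or_lt with rfl | hct
    · simp [γ, hc]
    · exact if_neg hct.not_ge
  have piece : ∀ s : Set ℝ, IsClosed s → IsIntegralCurveOn γ v s →
      ∀ t, HasDerivWithinAt γ (v t (γ t)) s t := fun s hs hγ t ↦ by
    by_cases ht : t ∈ s
    · exact hγ t ht
    · exact HasFDerivWithinAt.of_notMem_closure (by rwa [hs.closure_eq])
  intro t _
  rw [← Icc_union_Icc_eq_Icc hac hcb]
  exact (piece _ isClosed_Icc h₁' t).union (piece _ isClosed_Icc h₂' t)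

theorem exists_isIntegralCurveOn_Icc_of_mul_le [CompleteSpace E] {A : ℝ → E →L[𝕜] E}
    (hA : ∀ x, Continuous fun t ↦ A t x) {M : ℝ≥0} {a b : ℝ} (hab : a ≤ b)
    (hM : ∀ t ∈ Icc a b, ‖A t‖₊ ≤ M) (hlen : 2 * M * (b - a) ≤ 1) (x₀ : E) :
    ∃ u : ℝ → E, u a = x₀ ∧ IsIntegralCurveOn u (fun t ↦ A t) (Icc a b) := by
  -- On the ball of radius `‖x₀‖` about `x₀` the field is bounded by `2 M ‖x₀‖`.
  have hpl : IsPicardLindelof (fun t ↦ A t) (⟨a, left_mem_Icc.2 hab⟩ : Icc a b) x₀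
      ‖x₀‖₊ 0 (2 * M * ‖x₀‖₊) M := by
    constructor
    · exact fun t ht ↦ ((A t).lipschitz.weaken (hM t ht)).lipschitzOnWith
    · exact fun x _ ↦ (hA x).continuousOn
    · intro t ht x hx
      have hx' : ‖x‖ ≤ 2 * ‖x₀‖ := by
        have := norm_le_norm_add_norm_sub' x x₀
        rw [mem_closedBall_iff_norm, coe_nnnorm] at hx
        linarith
      have hAt : ‖A t‖ ≤ M := by exact_mod_cast hM t ht
      calc ‖A t x‖ ≤ ‖A t‖ * ‖x‖ := (A t).le_opNorm x
        _ ≤ M * (2 * ‖x₀‖) := by gcongr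
        _ = ↑(2 * M * ‖x₀‖₊) := by push_cast; ring
    · rw [sub_self, max_eq_left (sub_nonneg.2 hab)]
      push_cast
      nlinarith [norm_nonneg x₀]
  exact hpl.exists_eq_forall_mem_Icc_hasDerivWithinAt₀

theorem exists_isIntegralCurveOn_Icc_of_le_mul [CompleteSpace E] {A : ℝ → E →L[𝕜] E}
    (hA : ∀ x, Continuous fun t ↦ A t x) {M : ℝ≥0} {δ : ℝ} (hδ : 2 * M * δ ≤ 1) (n : ℕ) :
    ∀ {a b : ℝ}, a ≤ b → (∀ t ∈ Icc a b, ‖A t‖₊ ≤ M) → b - a ≤ n * δ → ∀ x₀ : E,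
      ∃ u : ℝ → E, u a = x₀ ∧ IsIntegralCurveOn u (fun t ↦ A t) (Icc a b) := by
  induction n with
  | zero =>
    intro a b hab hM hlen
    refine exists_isIntegralCurveOn_Icc_of_mul_le hA hab hM ?_
    have : b - a ≤ 0 := by simpa using hlen
    nlinarith [M.coe_nonneg]
  | succ n ih =>
    intro a b hab hM hlen x₀
    have hδ₀ : 0 ≤ δ := by
      push_cast at hlen
      nlinarith
    set c := min b (a + δ)
    have hac : a ≤ c := le_min hab (by linarith)
    have hcb : c ≤ b := min_le_left _ _
    obtain ⟨u₁, hu₁a, hu₁⟩ := exists_isIntegralCurveOn_Icc_of_mul_le hA hac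
      (fun t ht ↦ hM t ⟨ht.1, ht.2.trans hcb⟩)
      (by nlinarith [min_le_right b (a + δ), M.coe_nonneg]) x₀
    obtain ⟨u₂, hu₂c, hu₂⟩ := ih hcb (fun t ht ↦ hM t ⟨hac.trans ht.1, ht.2⟩)
      (by
        push_cast at hlen
        rcases min_cases b (a + δ) with ⟨h, -⟩ | ⟨h, -⟩ <;> simp only [c, h] <;> nlinarith)
      (u₁ c)
    exact ⟨_, by simp [hac, hu₁a], hu₁.ite_Icc hac hcb hu₂ hu₂c.symm⟩

theorem exists_isIntegralCurveOn_Icc_of_le [CompleteSpace E] {A : ℝ → E →L[𝕜] E}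
    (hA : ∀ x, Continuous fun t ↦ A t x) {a b : ℝ} (hab : a ≤ b) (x₀ : E) :
    ∃ u : ℝ → E, u a = x₀ ∧ IsIntegralCurveOn u (fun t ↦ A t) (Icc a b) := by
  obtain ⟨M, hM⟩ :=
    isCompact_Icc.exists_forall_nnnorm_le_of_continuousOn_apply fun x ↦ (hA x).continuousOn
  set δ : ℝ := 1 / (2 * M + 1)
  have hδ : 0 < δ := by positivity
  obtain ⟨n, hn⟩ := exists_nat_ge ((b - a) / δ)
  refine exists_isIntegralCurveOn_Icc_of_le_mul hA (δ := δ) ?_ n hab hM ?_ x₀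
  · rw [mul_one_div, div_le_one (by positivity)]
    linarith
  · rwa [div_le_iff₀ hδ] at hn

theorem exists_eq_isIntegralCurveOn_Icc [CompleteSpace E] {A : ℝ → E →L[𝕜] E}
    (hA : ∀ x, Continuous fun t ↦ A t x) {a b t₀ : ℝ} (ht₀ : t₀ ∈ Icc a b) (x₀ : E) :
    ∃ u : ℝ → E, u t₀ = x₀ ∧ IsIntegralCurveOn u (fun t ↦ A t) (Icc a b) := by
  obtain ⟨u₂, hu₂, hu₂int⟩ := exists_isIntegralCurveOn_Icc_of_le hA ht₀.2 x₀
  -- The solution on `[a, t₀]` is a forward solution of the time-reversed equation, read backwards.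
  obtain ⟨w, hw, hwint⟩ := exists_isIntegralCurveOn_Icc_of_le (A := fun t ↦ -A (-t))
    (fun x ↦ ((hA x).comp continuous_neg).neg) (neg_le_neg ht₀.1) x₀
  have hu₁int : IsIntegralCurveOn (w ∘ (· * -1)) (fun t ↦ A t) (Icc a t₀) := by
    convert hwint.comp_mul (-1) using 1
    · ext t x
      simp
    · ext t
      simp [and_comm]
  exact ⟨_, by simp [hw], hu₁int.ite_Icc ht₀.1 ht₀.2 hu₂int (by simp [hw, hu₂])⟩

end LinearODE

section InnerProductSpace

variable {𝕜 F : Type*} [RCLike 𝕜] [NormedAddCommGroup F] [InnerProductSpace 𝕜 F]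

theorem norm_eq_of_hasDerivWithinAt_of_re_inner_eq_zero [NormedSpace ℝ F] {f f' : ℝ → F}
    {a b : ℝ} (hf : ∀ t ∈ Icc a b, HasDerivWithinAt f (f' t) (Icc a b) t)
    (hf' : ∀ t ∈ Icc a b, re (inner 𝕜 (f t) (f' t)) = 0) :
    ∀ t ∈ Icc a b, ‖f t‖ = ‖f a‖ := by
  have hconst : ∀ t ∈ Icc a b, inner 𝕜 (f t) (f t) = inner 𝕜 (f a) (f a) :=
    constant_of_hasDerivWithinAt_Icc_zero fun t ht ↦ by
      have hd := (hf t ht).inner 𝕜 (hf t ht)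
      rwa [← inner_conj_symm (f' t) (f t), add_conj, hf' t ht, ofReal_zero,
        mul_zero] at hd
  intro t ht
  have h := hconst t ht
  simp only [inner_self_eq_norm_sq_to_K] at h
  exact (pow_left_inj₀ (norm_nonneg _) (norm_nonneg _) two_ne_zero).mp (by exact_mod_cast h)

theorem IsSelfAdjoint.re_inner_smul_apply_self [CompleteSpace F] {V : F →L[𝕜] F}
    (hV : IsSelfAdjoint V) {c : 𝕜} (hc : re c = 0) (x : F) :
    re (inner 𝕜 x (c • V x)) = 0 := by
  have h := hV.isSymmetric.im_inner_self_apply x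
  rw [ContinuousLinearMap.coe_coe] at h
  rw [inner_smul_right, mul_re, hc, h, zero_mul, mul_zero, sub_zero]

end InnerProductSpace

section NormConservation

variable {H : Type*} [NormedAddCommGroup H] [InnerProductSpace ℂ H] [CompleteSpace H]
  {VL VR C : ℝ → H →L[ℂ] H}

theorem norm_apply_eq_of_isIntegralCurveOn (hVL : ∀ t, IsSelfAdjoint (VL t))
    (hC : ∀ (x : H) (t : ℝ),
      HasDerivAt (fun τ ↦ C τ x) (-Complex.I • (VL t (C t x) + C t (VR t x))) t)
    {a b : ℝ} {u : ℝ → H} (hu : IsIntegralCurveOn u (fun t ↦ Complex.I • VR t) (Icc a b)) :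
    ∀ t ∈ Icc a b, ‖C t (u t)‖ = ‖C a (u a)‖ := by
  have hC_cont : ∀ x, Continuous fun τ ↦ C τ x :=
    fun x ↦ continuous_iff_continuousAt.2 fun t ↦ (hC x t).continuousAt
  obtain ⟨M, hM⟩ := isCompact_Icc.exists_forall_nnnorm_le_of_continuousOn_apply
    (K := Icc a b) fun x ↦ (hC_cont x).continuousOn
  refine norm_eq_of_hasDerivWithinAt_of_re_inner_eq_zero (𝕜 := ℂ)
    (f' := fun t ↦ -Complex.I • VL t (C t (u t))) (fun t ht ↦ ?_)
    fun t _ ↦ (hVL t).re_inner_smul_apply_self (by simp) _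
  convert HasDerivWithinAt.clm_apply_of_eventually_norm_le (fun x ↦ (hC x t).hasDerivWithinAt)
    (eventually_nhdsWithin_of_forall fun τ hτ ↦ (coe_le_coe.2 (hM τ hτ) : ‖C τ‖ ≤ M))
    (hu t ht) using 1
  simp [smul_add]

theorem opNorm_le_of_mem_Icc (hVL : ∀ t, IsSelfAdjoint (VL t))
    (hVR_cont : ∀ x : H, Continuous fun t ↦ VR t x) (hVR : ∀ t, IsSelfAdjoint (VR t))
    (hC : ∀ (x : H) (t : ℝ),
      HasDerivAt (fun τ ↦ C τ x) (-Complex.I • (VL t (C t x) + C t (VR t x))) t)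
    {a b s r : ℝ} (hs : s ∈ Icc a b) (hr : r ∈ Icc a b) : ‖C s‖ ≤ ‖C r‖ := by
  refine opNorm_le_bound _ (norm_nonneg _) fun x ↦ ?_
  obtain ⟨u, rfl, hu⟩ := exists_eq_isIntegralCurveOn_Icc (A := fun t ↦ Complex.I • VR t)
    (fun x ↦ (hVR_cont x).const_smul _) hs x
  have hCu := norm_apply_eq_of_isIntegralCurveOn hVL hC hu
  have hu_norm := norm_eq_of_hasDerivWithinAt_of_re_inner_eq_zero (𝕜 := ℂ) hu
    fun t _ ↦ (hVR t).re_inner_smul_apply_self (by simp) _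
  calc ‖C s (u s)‖ = ‖C r (u r)‖ := by rw [hCu s hs, hCu r hr]
    _ ≤ ‖C r‖ * ‖u r‖ := le_opNorm _ _
    _ = ‖C r‖ * ‖u s‖ := by rw [hu_norm r hr, hu_norm s hs]

end NormConservation

theorem operator_norm_conserved_general
    {H : Type*} [NormedAddCommGroup H] [InnerProductSpace ℂ H] [CompleteSpace H]
    (VL VR : ℝ → H →L[ℂ] H)
    (hVR_strong_cont : ∀ x : H, Continuous fun t => VR t x)
    (hVL_sa : ∀ t : ℝ, IsSelfAdjoint (VL t))
    (hVR_sa : ∀ t : ℝ, IsSelfAdjoint (VR t))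
    (C : ℝ → H →L[ℂ] H)
    (hC_ode : ∀ (x : H) (t : ℝ),
      HasDerivAt (fun τ : ℝ => C τ x) (-(Complex.I) • (VL t (C t x) + C t (VR t x))) t) :
    ∀ t : ℝ, ‖C t‖ = ‖C 0‖ := by
  intro t
  have h₀ : (0 : ℝ) ∈ uIcc 0 t := left_mem_uIcc
  have hₜ : t ∈ uIcc 0 t := right_mem_uIcc
  exact le_antisymm (opNorm_le_of_mem_Icc hVL_sa hVR_strong_cont hVR_sa hC_ode hₜ h₀)
    (opNorm_le_of_mem_Icc hVL_sa hVR_strong_cont hVR_sa hC_ode h₀ hₜ)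

/-- **Conservation of the operator norm.**
Let `V_L, V_R : ℝ → B(H)` be strongly continuous, locally norm-bounded, selfadjoint families,
and let `C : ℝ → B(H)` satisfy, for every `x ∈ H`,
`i d/dt (C t x) = V_L t (C t x) + C t (V_R t x)`. Then the operator norm is conserved:
`‖C t‖ = ‖C 0‖` for all `t`. -/
theorem operator_norm_conserved
    {H : Type*} [NormedAddCommGroup H] [InnerProductSpace ℂ H] [CompleteSpace H]
    (VL VR : ℝ → H →L[ℂ] H)
    (hVL_strong_cont : ∀ x : H, Continuous fun t => VL t x)
    (hVR_strong_cont : ∀ x : H, Continuous fun t => VR t x)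
    (hVL_loc_bdd : ∀ T : ℝ, 0 < T → ∃ M : ℝ, ∀ t : ℝ, |t| ≤ T → ‖VL t‖ ≤ M)
    (hVR_loc_bdd : ∀ T : ℝ, 0 < T → ∃ M : ℝ, ∀ t : ℝ, |t| ≤ T → ‖VR t‖ ≤ M)
    (hVL_sa : ∀ t : ℝ, IsSelfAdjoint (VL t))
    (hVR_sa : ∀ t : ℝ, IsSelfAdjoint (VR t))
    (C : ℝ → H →L[ℂ] H)
    (hC_ode : ∀ (x : H) (t : ℝ),
      HasDerivAt (fun τ : ℝ => C τ x) (-(Complex.I) • (VL t (C t x) + C t (VR t x))) t) :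
    ∀ t : ℝ, ‖C t‖ = ‖C 0‖ :=
  operator_norm_conserved_general VL VR hVR_strong_cont hVL_sa hVR_sa C hC_ode
end

section
/- Let H : ℝ → B(𝓗) with H(t) selfadjoint for every t, and let w : ℝ → B(𝓗) be differentiable in operator norm and satisfy the anticommutator equation i w'(t) = H(t) w(t) + w(t) H(t). Then the density matrix K(t) := w(t) w(t)* is differentiable in operator norm and satisfies the von Neumann equation i K'(t) = H(t) K(t) − K(t) H(t). -/
open ContinuousLinearMap

/-! Differentiating `w w*` by the product rule gives `w' w* + w (w')*`; substituting
`w' = -i (H w + w H)` and `(w')* = i (w* H + H w*)` (as `H* = H`), the cross terms `∓ i w H w*`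
cancel and what remains is `-i (H (w w*) - (w w*) H)`. -/

theorem HasDerivAt.mul_star {A : Type*} [NormedRing A] [NormedAlgebra ℝ A] [StarRing A]
    [StarModule ℝ A] [ContinuousStar A] {f : ℝ → A} {f' : A} {x : ℝ}
    (hf : HasDerivAt f f' x) :
    HasDerivAt (fun y => f y * star (f y)) (f' * star (f x) + f x * star f') x :=
  hf.mul hf.star

theorem mul_star_add_mul_star_eq_neg_I_smul_commutator {A : Type*} [Ring A] [StarRing A]
    [Algebra ℂ A] [StarModule ℂ A] {h w w' : A} (hh : IsSelfAdjoint h)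
    (hw' : w' = -Complex.I • (h * w + w * h)) :
    w' * star w + w * star w' = -Complex.I • (h * (w * star w) - (w * star w) * h) := by
  subst hw'
  simp only [star_smul, star_add, star_mul, hh.star_eq, Complex.star_def, map_neg, Complex.conj_I,
    smul_mul_assoc, mul_smul_comm, mul_add, add_mul, mul_assoc]
  module

/-- **From the anticommutator (wave-matrix) equation to the von Neumann equation.**
Let `H t ∈ B(𝓗)` be selfadjoint for every `t`, and let `w : ℝ → B(𝓗)` be differentiable in
operator norm with `i w'(t) = H t w t + w t H t`. Then the density matrix
`K t := w t (w t)*` is differentiable in operator norm and satisfies the von Neumann equation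
`i K'(t) = H t K t − K t H t`. -/
theorem wave_matrix_to_von_Neumann
    {𝓗 : Type*} [NormedAddCommGroup 𝓗] [InnerProductSpace ℂ 𝓗] [CompleteSpace 𝓗]
    (Hop : ℝ → 𝓗 →L[ℂ] 𝓗)
    (hH_sa : ∀ t : ℝ, IsSelfAdjoint (Hop t))
    (w : ℝ → 𝓗 →L[ℂ] 𝓗)
    (hw_ode : ∀ t : ℝ,
      HasDerivAt w (-(Complex.I) • ((Hop t) ∘L (w t) + (w t) ∘L (Hop t))) t) :
    ∀ t : ℝ,
      HasDerivAt (fun τ : ℝ => (w τ) ∘L adjoint (w τ))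
        (-(Complex.I) •
          ((Hop t) ∘L ((w t) ∘L adjoint (w t)) - ((w t) ∘L adjoint (w t)) ∘L (Hop t))) t := by
  intro t
  simp only [← star_eq_adjoint]
  exact (mul_star_add_mul_star_eq_neg_I_smul_commutator (hH_sa t) rfl) ▸ (hw_ode t).mul_star
end

section
/- Let 𝓗 be a complex Hilbert space and N ≥ 0 a real number. Then the set { ½(w w* + w* w) : w a Hilbert–Schmidt operator on 𝓗 with operator norm ‖w‖ ≤ 1 and tr(w w*) = N } coincides with the set of density matrices { K ∈ B(𝓗) : K selfadjoint, trace class, 0 ≤ K ≤ 1, tr K = N }. In particular, every density matrix K in the second set arises from the wave matrix w = K^{1/2} (which satisfies w w* = w* w = K). -/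
open ContinuousLinearMap

noncomputable section

variable {𝓗 : Type*} [NormedAddCommGroup 𝓗] [InnerProductSpace ℂ 𝓗] [CompleteSpace 𝓗]
  {ι : Type*}

/-- The set of operators of the form `½(w w* + w* w)` where `w` is a Hilbert–Schmidt
wave matrix with operator norm `‖w‖ ≤ 1` and `tr (w w*) = ‖w‖²_{HS} = N`
(Hilbert–Schmidt property and trace expressed via the orthonormal basis `e`). -/
def waveMatrixDensities (e : HilbertBasis ι ℂ 𝓗) (N : ℝ) : Set (𝓗 →L[ℂ] 𝓗) :=
  {K | ∃ w : 𝓗 →L[ℂ] 𝓗,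
    (Summable fun k : ι => ‖w (e k)‖ ^ 2) ∧ ‖w‖ ≤ 1 ∧
    (∑' k : ι, ‖w (e k)‖ ^ 2) = N ∧
    K = (1 / 2 : ℂ) • (w ∘L adjoint w + adjoint w ∘L w)}

/-- The set of density matrices: selfadjoint trace-class operators `K` with `0 ≤ K ≤ 1` and
`tr K = N` (for a nonnegative operator, the trace-class property and the trace are expressed
through the summability of the diagonal in the orthonormal basis `e`). -/
def densityMatrices (e : HilbertBasis ι ℂ 𝓗) (N : ℝ) : Set (𝓗 →L[ℂ] 𝓗) :=
  {K | IsSelfAdjoint K ∧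
    (∀ x : 𝓗, 0 ≤ (inner ℂ x (K x) : ℂ).re ∧ (inner ℂ x (K x) : ℂ).re ≤ ‖x‖ ^ 2) ∧
    (Summable fun k : ι => (inner ℂ (e k) (K (e k)) : ℂ).re) ∧
    (∑' k : ι, (inner ℂ (e k) (K (e k)) : ℂ).re) = N}

/-!
For `K = ½(w w* + w* w)` one has `re ⟪x, K x⟫ = ½(‖w* x‖² + ‖w x‖²)`, which lies in `[0, ‖x‖²]`
because `‖w*‖ = ‖w‖ ≤ 1`; the trace of `K` is the mean of the Hilbert–Schmidt sums of `w` and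
`w*`, and these agree by Parseval's identity after swapping a double sum of nonnegative terms
`|⟪e j, w e i⟫|²`. Conversely a density matrix satisfies `0 ≤ K ≤ 1` in the Loewner order, so
`w = √K` is selfadjoint with `‖w‖ = √‖K‖ ≤ 1` and `‖w x‖² = re ⟪x, K x⟫`, whence its
Hilbert–Schmidt sum is `tr K`.
-/

section

variable {𝕜 E F κ : Type*} [RCLike 𝕜]
  [NormedAddCommGroup E] [InnerProductSpace 𝕜 E] [NormedAddCommGroup F] [InnerProductSpace 𝕜 F]

open RCLike

theorem HilbertBasis.hasSum_norm_inner_sq (b : HilbertBasis ι 𝕜 E) (x : E) :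
    HasSum (fun i => ‖inner 𝕜 (b i) x‖ ^ 2) (‖x‖ ^ 2) := by
  have h := b.hasSum_inner_mul_inner x x
  simp only [← inner_conj_symm x (b _), RCLike.conj_mul, inner_self_eq_norm_sq_to_K] at h
  exact_mod_cast h

variable [CompleteSpace E] [CompleteSpace F]

theorem HilbertBasis.hasSum_norm_adjoint_apply_sq (e : HilbertBasis ι 𝕜 E)
    (f : HilbertBasis κ 𝕜 F) {w : E →L[𝕜] F} {S : ℝ}
    (hw : HasSum (fun i => ‖w (e i)‖ ^ 2) S) :
    HasSum (fun k => ‖adjoint w (f k)‖ ^ 2) S := by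
  let a : ι × κ → ℝ := fun p => ‖inner 𝕜 (f p.2) (w (e p.1))‖ ^ 2
  have row (i : ι) : HasSum (fun k => a (i, k)) (‖w (e i)‖ ^ 2) := f.hasSum_norm_inner_sq (w (e i))
  have col (k : κ) : HasSum (fun i => a (i, k)) (‖adjoint w (f k)‖ ^ 2) := by
    simpa only [a, adjoint_inner_right, norm_inner_symm (f k)] using
      e.hasSum_norm_inner_sq (adjoint w (f k))
  have ha : Summable a := (summable_prod_of_nonneg fun _ => by positivity).2
    ⟨fun i => (row i).summable, by simpa only [(row _).tsum_eq] using hw.summable⟩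
  rw [hw.unique (ha.hasSum.prod_fiberwise row)]
  exact ((Equiv.prodComm κ ι).hasSum_iff.2 ha.hasSum).prod_fiberwise col

theorem re_inner_symmetrization_apply (w : E →L[𝕜] E) (x : E) :
    re (inner 𝕜 x (((1 / 2 : 𝕜) • (w ∘L adjoint w + adjoint w ∘L w)) x)) =
      (‖adjoint w x‖ ^ 2 + ‖w x‖ ^ 2) / 2 := by
  have h₁ : inner 𝕜 x ((w ∘L adjoint w) x) = ((‖adjoint w x‖ ^ 2 : ℝ) : 𝕜) := by
    rw [comp_apply, ← adjoint_inner_left, inner_self_eq_norm_sq_to_K, ofReal_pow]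
  have h₂ : inner 𝕜 x ((adjoint w ∘L w) x) = ((‖w x‖ ^ 2 : ℝ) : 𝕜) := by
    rw [comp_apply, adjoint_inner_right, inner_self_eq_norm_sq_to_K, ofReal_pow]
  rw [smul_apply, inner_smul_right, add_apply, inner_add_right, h₁, h₂]
  rw [← ofReal_add, one_div, ← ofReal_ofNat, ← ofReal_inv, ← ofReal_mul, ofReal_re]
  ring

theorem isSelfAdjoint_symmetrization (w : E →L[𝕜] E) :
    IsSelfAdjoint ((1 / 2 : 𝕜) • (w ∘L adjoint w + adjoint w ∘L w)) :=
  .smul (by simp [IsSelfAdjoint]) ((IsSelfAdjoint.mul_star_self w).add (.star_mul_self w))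

theorem IsSelfAdjoint.nonneg_iff_forall_re_inner_nonneg {K : E →L[𝕜] E} (hK : IsSelfAdjoint K) :
    0 ≤ K ↔ ∀ x, 0 ≤ re (inner 𝕜 x (K x)) := by
  simp only [nonneg_iff_isPositive, isPositive_def', hK, true_and, reApplyInnerSelf_apply,
    inner_re_symm (K _)]

theorem IsSelfAdjoint.le_one_iff_forall_re_inner_le {K : E →L[𝕜] E} (hK : IsSelfAdjoint K) :
    K ≤ 1 ↔ ∀ x, re (inner 𝕜 x (K x)) ≤ ‖x‖ ^ 2 := by
  simp only [le_def, isPositive_def', (IsSelfAdjoint.one _).sub hK, true_and,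
    reApplyInnerSelf_apply, sub_apply, one_apply_eq_self, inner_sub_left, map_sub,
    inner_re_symm (K _), inner_self_eq_norm_sq, sub_nonneg]

end

theorem CFC.norm_sqrt_le_one {A : Type*} [CStarAlgebra A] [PartialOrder A] [StarOrderedRing A]
    {a : A} (h₀ : 0 ≤ a) (h₁ : a ≤ 1) : ‖CFC.sqrt a‖ ≤ 1 := by
  rw [CFC.norm_sqrt a, Real.sqrt_le_one]
  exact (CStarAlgebra.norm_le_one_iff_of_nonneg a).2 h₁

theorem norm_sqrt_apply_sq {K : 𝓗 →L[ℂ] 𝓗} (hK : 0 ≤ K) (x : 𝓗) :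
    ‖CFC.sqrt K x‖ ^ 2 = (inner ℂ x (K x)).re := by
  rw [apply_norm_sq_eq_inner_adjoint_right, (CFC.sqrt_nonneg K).isSelfAdjoint.adjoint_eq]
  rw [← mul_def, CFC.sqrt_mul_sqrt_self K hK, RCLike.re_to_complex]

theorem symmetrization_mem_densityMatrices (e : HilbertBasis ι ℂ 𝓗) {N : ℝ} {w : 𝓗 →L[ℂ] 𝓗}
    (hw : HasSum (fun k => ‖w (e k)‖ ^ 2) N) (hw₁ : ‖w‖ ≤ 1) :
    (1 / 2 : ℂ) • (w ∘L adjoint w + adjoint w ∘L w) ∈ densityMatrices e N := by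
  have hdiag := ((e.hasSum_norm_adjoint_apply_sq e hw).add hw).div_const 2
  rw [add_self_div_two] at hdiag
  simp only [← re_inner_symmetrization_apply, RCLike.re_to_complex] at hdiag
  refine ⟨isSelfAdjoint_symmetrization w, fun x => ?_, hdiag.summable, hdiag.tsum_eq⟩
  have h₁ : ‖w x‖ ^ 2 ≤ ‖x‖ ^ 2 := by
    gcongr; simpa using w.le_of_opNorm_le hw₁ x
  have h₂ : ‖adjoint w x‖ ^ 2 ≤ ‖x‖ ^ 2 := by
    gcongr; simpa using (adjoint w).le_of_opNorm_le ((adjoint.norm_map w).trans_le hw₁) x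
  rw [← RCLike.re_to_complex, re_inner_symmetrization_apply]
  constructor <;> linarith [sq_nonneg ‖w x‖, sq_nonneg ‖adjoint w x‖]

theorem exists_sqrt_of_mem_densityMatrices (e : HilbertBasis ι ℂ 𝓗) {N : ℝ} :
    ∀ K ∈ densityMatrices e N, ∃ w : 𝓗 →L[ℂ] 𝓗,
      IsSelfAdjoint w ∧ (∀ x : 𝓗, 0 ≤ (inner ℂ x (w x) : ℂ).re) ∧
      w ∘L w = K ∧
      (Summable fun k : ι => ‖w (e k)‖ ^ 2) ∧ ‖w‖ ≤ 1 ∧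
      (∑' k : ι, ‖w (e k)‖ ^ 2) = N ∧
      w ∘L adjoint w = K ∧ adjoint w ∘L w = K := by
  rintro K ⟨hK, hbounds, hsum, htr⟩
  have h₀ : 0 ≤ K := hK.nonneg_iff_forall_re_inner_nonneg.2 fun x => (hbounds x).1
  have h₁ : K ≤ 1 := hK.le_one_iff_forall_re_inner_le.2 fun x => (hbounds x).2
  have hw : IsSelfAdjoint (CFC.sqrt K) := (CFC.sqrt_nonneg K).isSelfAdjoint
  have hww : CFC.sqrt K ∘L CFC.sqrt K = K := CFC.sqrt_mul_sqrt_self K h₀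
  have hdiag : (fun k => ‖CFC.sqrt K (e k)‖ ^ 2) = fun k => (inner ℂ (e k) (K (e k))).re :=
    funext fun k => norm_sqrt_apply_sq h₀ (e k)
  refine ⟨CFC.sqrt K, hw, hw.nonneg_iff_forall_re_inner_nonneg.1 (CFC.sqrt_nonneg K), hww,
    hdiag ▸ hsum, CFC.norm_sqrt_le_one h₀ h₁, hdiag ▸ htr, ?_, ?_⟩ <;> rwa [hw.adjoint_eq]

theorem waveMatrixDensities_eq_densityMatrices_general
    (e : HilbertBasis ι ℂ 𝓗) (N : ℝ) :
    waveMatrixDensities e N = densityMatrices e N ∧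
    ∀ K ∈ densityMatrices e N, ∃ w : 𝓗 →L[ℂ] 𝓗,
      IsSelfAdjoint w ∧ (∀ x : 𝓗, 0 ≤ (inner ℂ x (w x) : ℂ).re) ∧
      w ∘L w = K ∧
      (Summable fun k : ι => ‖w (e k)‖ ^ 2) ∧ ‖w‖ ≤ 1 ∧
      (∑' k : ι, ‖w (e k)‖ ^ 2) = N ∧
      w ∘L adjoint w = K ∧ adjoint w ∘L w = K := by
  refine ⟨Set.Subset.antisymm ?_ ?_, exists_sqrt_of_mem_densityMatrices e⟩
  · rintro _ ⟨w, hws, hwn, hwt, rfl⟩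
    exact symmetrization_mem_densityMatrices e (hwt ▸ hws.hasSum) hwn
  · intro K hK
    obtain ⟨w, -, -, -, hws, hwn, hwt, h₁, h₂⟩ := exists_sqrt_of_mem_densityMatrices e K hK
    exact ⟨w, hws, hwn, hwt, by rw [h₁, h₂]; module⟩

/-- **Wave matrices realize exactly the density matrices.**
For a complex Hilbert space `𝓗` and `N ≥ 0`, the set
`{½(w w* + w* w) : w Hilbert–Schmidt, ‖w‖ ≤ 1, tr(w w*) = N}` coincides with the set of
density matrices `{K : K selfadjoint, trace class, 0 ≤ K ≤ 1, tr K = N}`. In particular,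
every density matrix `K` arises from the wave matrix `w = K^{1/2}`: a nonnegative
selfadjoint `w` with `w² = K`, which then satisfies `w w* = w* w = K`. -/
theorem waveMatrixDensities_eq_densityMatrices
    (e : HilbertBasis ι ℂ 𝓗) (N : ℝ) (hN : 0 ≤ N) :
    waveMatrixDensities e N = densityMatrices e N ∧
    ∀ K ∈ densityMatrices e N, ∃ w : 𝓗 →L[ℂ] 𝓗,
      IsSelfAdjoint w ∧ (∀ x : 𝓗, 0 ≤ (inner ℂ x (w x) : ℂ).re) ∧
      w ∘L w = K ∧
      (Summable fun k : ι => ‖w (e k)‖ ^ 2) ∧ ‖w‖ ≤ 1 ∧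
      (∑' k : ι, ‖w (e k)‖ ^ 2) = N ∧
      w ∘L adjoint w = K ∧ adjoint w ∘L w = K :=
  waveMatrixDensities_eq_densityMatrices_general e N

end
end
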